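/- The number of subsets H of {1,...,n}×{1,...,r} such that |H| = n and for every k with 1 ≤ k ≤ n, the intersection of H with {1,...,k}×{1,...,r} has cardinality at least k, equals (r(n+1))! / ((n+1)! · ((r-1)(n+1)+1)!), the higher Catalan number. -/

import Mathlib

/-!
Listing the cells of the grid row by row, last row first, and adding one extra point turns `H`
into an `(n+1)`-subset `T` of `ℤ/N`, `N = r(n+1)+1`, that is *dominant*: for every `p ≤ N`,
fewer than `p / r` points of `T` lie in `[0, p)`. Since `r · #T = N - 1`, the function
`x ↦ x - r · #{i < x | i mod N ∈ T}` gains exactly `1` per period, so by Raney's cycle lemma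
exactly one rotation of any `(n+1)`-subset of `ℤ/N` is dominant. Hence there are `C(N, n+1) / N`
dominant sets, which is the higher Catalan number.
-/

open scoped Classical
open Finset Pointwise
open scoped Nat

/-- Raney's cycle lemma, for the partial sums `f` of an `N`-periodic sequence of total sum `1`. -/
theorem existsUnique_lt_forall_lt_apply_add {N : ℕ} (hN : 0 < N) {f : ℕ → ℤ}
    (hf : ∀ x, f (x + N) = f x + 1) :
    ∃! s, s < N ∧ ∀ p ∈ Icc 1 N, f s < f (s + p) := by
  refine existsUnique_of_exists_of_unique ?_ ?_
  · -- minimising `N * f x - x` picks the last minimiser of `f` on `[0, N)`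
    obtain ⟨s, hs, hmin⟩ :=
      exists_min_image (range N) (fun x => N * f x - x) ⟨0, mem_range.2 hN⟩
    refine ⟨s, mem_range.1 hs, fun p hp => ?_⟩
    rw [mem_range] at hs
    rw [mem_Icc] at hp
    have hN' : (0 : ℤ) < N := by exact_mod_cast hN
    rcases lt_or_ge (s + p) N with hsp | hsp
    · have := hmin (s + p) (mem_range.2 hsp)
      push_cast at this
      exact lt_of_mul_lt_mul_left (by linarith) hN'.le
    · have := hmin (s + p - N) (mem_range.2 (by omega))
      rw [← Nat.sub_add_cancel hsp, hf]
      push_cast [hsp] at this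
      exact lt_of_mul_lt_mul_left (a := (N : ℤ)) (by nlinarith) hN'.le
  · intro s t ⟨hs, hsp⟩ ⟨ht, htp⟩
    by_contra hne
    wlog hst : s < t generalizing s t
    · exact this t s ht htp hs hsp (Ne.symm hne) (by omega)
    have h₁ := hsp (t - s) (mem_Icc.2 ⟨by omega, by omega⟩)
    have h₂ := htp (s + N - t) (mem_Icc.2 ⟨by omega, by omega⟩)
    rw [Nat.add_sub_cancel' hst.le] at h₁
    rw [show t + (s + N - t) = s + N by omega, hf] at h₂
    omega

section Dominant

variable {N : ℕ}

def IsDominant (r : ℕ) (T : Finset (ZMod N)) : Prop :=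
  ∀ p ∈ Icc 1 N, r * #{t ∈ T | t.val < p} < p

theorem isDominant_iff_forall_card_filter_val_lt_mul_lt {r K : ℕ} (hr : 0 < r)
    {T : Finset (ZMod N)} (hT : #T ≤ K) (hK : r * K < N) :
    IsDominant r T ↔ ∀ j ∈ Icc 1 K, #{t ∈ T | t.val < j * r} < j := by
  refine ⟨fun hT j hj => ?_, fun h p hp => ?_⟩
  · rw [mem_Icc] at hj
    have hjK : j * r ≤ r * K := by rw [mul_comm]; exact Nat.mul_le_mul_left r hj.2
    have hjr : 1 ≤ j * r := Nat.mul_pos (by omega) hr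
    refine Nat.lt_of_mul_lt_mul_left (a := r) ?_
    rw [mul_comm r j]
    exact hT _ (mem_Icc.2 ⟨hjr, by omega⟩)
  · set c := #{t ∈ T | t.val < p}
    rcases Nat.eq_zero_or_pos c with hc | hc
    · rw [hc, mul_zero]; exact (mem_Icc.1 hp).1
    have hcK : c ≤ K := (card_filter_le _ _).trans hT
    by_contra! hpc
    have hsub : {t ∈ T | t.val < p} ⊆ {t ∈ T | t.val < c * r} :=
      monotone_filter_right _ fun t ht => by rw [mul_comm]; omega
    exact (card_le_card hsub).not_gt (h c (mem_Icc.2 ⟨hc, hcK⟩))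

variable [NeZero N]

theorem count_natCast_mem_eq_card (T : Finset (ZMod N)) {p : ℕ} (hp : p ≤ N) :
    Nat.count (fun i => (i : ZMod N) ∈ T) p = #{t ∈ T | t.val < p} := by
  rw [Nat.count_eq_card_filter_range]
  refine card_nbij' (fun i => (i : ZMod N)) ZMod.val (fun i hi => ?_) (fun t ht => ?_)
    (fun i hi => ?_) (fun t _ => ZMod.natCast_zmod_val t)
  · simp only [mem_coe, mem_filter, mem_range] at hi ⊢
    rw [ZMod.val_cast_of_lt (by omega)]
    exact hi.symm
  · simp only [mem_coe, mem_filter, mem_range, ZMod.natCast_zmod_val] at ht ⊢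
    exact ht.symm
  · exact ZMod.val_cast_of_lt ((mem_range.1 (mem_filter.1 hi).1).trans_le hp)

theorem count_natCast_add_mem_eq_card (S : Finset (ZMod N)) (x : ℕ) {p : ℕ} (hp : p ≤ N) :
    Nat.count (fun i => ((x + i : ℕ) : ZMod N) ∈ S) p =
      #{t ∈ -(x : ZMod N) +ᵥ S | t.val < p} := by
  rw [← count_natCast_mem_eq_card _ hp]
  simp only [Finset.mem_neg_vadd_finset_iff, vadd_eq_add, Nat.cast_add]

theorem existsUnique_isDominant_neg_vadd {r : ℕ} {S : Finset (ZMod N)} (hS : r * #S + 1 = N) :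
    ∃! s : ZMod N, IsDominant r (-s +ᵥ S) := by
  set f : ℕ → ℤ := fun x => x - r * Nat.count (fun i => (i : ZMod N) ∈ S) x
  have hf_add (x p : ℕ) (hp : p ≤ N) :
      f (x + p) = f x + p - r * #{t ∈ -(x : ZMod N) +ᵥ S | t.val < p} := by
    simp only [f, Nat.count_add, ← count_natCast_add_mem_eq_card S x hp]
    push_cast; ring
  have hf (x : ℕ) : f (x + N) = f x + 1 := by
    rw [hf_add x N le_rfl, filter_true_of_mem (fun t _ => ZMod.val_lt t), card_vadd_finset]
    have : (N : ℤ) = r * #S + 1 := by exact_mod_cast hS.symm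
    linarith
  have hdom (s : ZMod N) :
      IsDominant r (-s +ᵥ S) ↔ ∀ p ∈ Icc 1 N, f s.val < f (s.val + p) := by
    refine forall₂_congr fun p hp => ?_
    rw [hf_add _ _ (mem_Icc.1 hp).2, ZMod.natCast_zmod_val]
    omega
  obtain ⟨s, ⟨hsN, hs⟩, huniq⟩ := existsUnique_lt_forall_lt_apply_add (NeZero.pos N) hf
  refine ⟨s, (hdom s).2 (by rwa [ZMod.val_cast_of_lt hsN]), fun t ht => ?_⟩
  rw [← ZMod.natCast_zmod_val t, huniq t.val ⟨ZMod.val_lt t, (hdom t).1 ht⟩]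

theorem mul_card_isDominant_eq_choose {r k : ℕ} (hN : r * k + 1 = N) :
    N * #{T : Finset (ZMod N) | #T = k ∧ IsDominant r T} = N.choose k := by
  set D := ({T : Finset (ZMod N) | #T = k ∧ IsDominant r T} : Finset _)
  calc N * #D = #((univ : Finset (ZMod N)) ×ˢ D) := by rw [card_product, card_univ, ZMod.card]
    _ = #(powersetCard k (univ : Finset (ZMod N))) := by
      refine card_bij (fun x _ => x.1 +ᵥ x.2) (fun x hx => ?_) (fun x hx y hy hxy => ?_)
        (fun S hS => ?_)
      · simp only [D, mem_product, mem_filter, mem_univ, true_and] at hx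
        rw [mem_powersetCard_univ, card_vadd_finset, hx.1]
      · simp only [D, mem_product, mem_filter, mem_univ, true_and] at hx hy
        have hS : r * #(x.1 +ᵥ x.2) + 1 = N := by rw [card_vadd_finset, hx.1, hN]
        have hxy₁ : x.1 = y.1 := (existsUnique_isDominant_neg_vadd hS).unique
          (by rw [neg_vadd_vadd]; exact hx.2) (by rw [hxy, neg_vadd_vadd]; exact hy.2)
        rw [hxy₁] at hxy
        exact Prod.ext hxy₁ (AddAction.injective y.1 hxy)
      · rw [mem_powersetCard_univ] at hS
        obtain ⟨s, hs, -⟩ := existsUnique_isDominant_neg_vadd (r := r) (hS ▸ hN)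
        refine ⟨(s, -s +ᵥ S), ?_, vadd_neg_vadd s S⟩
        simp only [D, mem_product, mem_filter, mem_univ, true_and, card_vadd_finset]
        exact ⟨hS, hs⟩
    _ = N.choose k := by rw [card_powersetCard, card_univ, ZMod.card]

end Dominant

section Grid
variable (n r : ℕ)

/-- Row `i` fills the block `[r (n - i), r (n - i) + r)`: listing the rows in reverse turns lower
bounds on the first `k` rows into upper bounds on initial segments. The block `[0, r)` stays empty
and `r (n + 1) = -1` is left for the extra point of `gridToCyclic`. -/
def gridPos (c : Fin n × Fin r) : ZMod (r * (n + 1) + 1) := (r * (n - c.1) + c.2 : ℕ)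

variable {n r}

theorem mul_sub_add_lt_mul_succ (c : Fin n × Fin r) : r * (n - c.1) + c.2 < r * (n + 1) := by
  have : r * (n - c.1) + r ≤ r * (n + 1) := by
    rw [← Nat.mul_succ]; exact Nat.mul_le_mul_left r (by omega)
  omega

theorem val_gridPos (c : Fin n × Fin r) : (gridPos n r c).val = r * (n - c.1) + c.2 :=
  ZMod.val_cast_of_lt ((mul_sub_add_lt_mul_succ c).trans (Nat.lt_succ_self _))

theorem val_gridPos_lt (c : Fin n × Fin r) : (gridPos n r c).val < r * (n + 1) :=
  val_gridPos c ▸ mul_sub_add_lt_mul_succ c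

theorem val_gridPos_lt_mul_iff (c : Fin n × Fin r) (j : ℕ) :
    (gridPos n r c).val < j * r ↔ n < c.1 + j := by
  rw [val_gridPos, mul_comm j]
  constructor
  · intro h
    by_contra! hj
    have := Nat.mul_le_mul_left r (show j ≤ n - c.1 by omega)
    omega
  · intro h
    have := Nat.mul_le_mul_left r (show n - c.1 + 1 ≤ j by omega)
    rw [Nat.mul_succ] at this
    omega

theorem gridPos_injective : Function.Injective (gridPos n r) := by
  intro c d hcd
  have hr : 0 < r := c.2.pos
  have h := congrArg ZMod.val hcd
  rw [val_gridPos, val_gridPos] at h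
  have hdiv := congrArg (· / r) h
  have hmod := congrArg (· % r) h
  simp only [Nat.mul_add_div hr, Nat.mul_add_mod, Nat.div_eq_of_lt c.2.isLt,
    Nat.div_eq_of_lt d.2.isLt, Nat.mod_eq_of_lt c.2.isLt, Nat.mod_eq_of_lt d.2.isLt] at hdiv hmod
  ext <;> omega

theorem exists_gridPos_eq {x : ZMod (r * (n + 1) + 1)} (h₁ : r ≤ x.val)
    (h₂ : x.val < r * (n + 1)) :
    ∃ c, gridPos n r c = x := by
  have hr : 0 < r := Nat.pos_of_ne_zero (by rintro rfl; simp at h₂)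
  have hq₁ : 1 ≤ x.val / r := (Nat.le_div_iff_mul_le hr).2 (by omega)
  have hq₂ : x.val / r < n + 1 := (Nat.div_lt_iff_lt_mul hr).2 (h₂.trans_eq (mul_comm _ _))
  refine ⟨(⟨n - x.val / r, by omega⟩, ⟨x.val % r, Nat.mod_lt _ hr⟩),
    ZMod.val_injective _ ?_⟩
  rw [val_gridPos]
  simp only
  rw [show n - (n - x.val / r) = x.val / r by omega, Nat.div_add_mod]

def gridToCyclic (H : Finset (Fin n × Fin r)) : Finset (ZMod (r * (n + 1) + 1)) :=
  insert (-1) (H.image (gridPos n r))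

theorem neg_one_notMem_image_gridPos (H : Finset (Fin n × Fin r)) :
    (-1 : ZMod (r * (n + 1) + 1)) ∉ H.image (gridPos n r) := by
  rintro h
  obtain ⟨c, -, hc⟩ := mem_image.1 h
  have := val_gridPos_lt c
  rw [hc, ZMod.val_neg_one] at this
  exact this.false

theorem card_gridToCyclic (H : Finset (Fin n × Fin r)) : #(gridToCyclic H) = #H + 1 := by
  rw [gridToCyclic, card_insert_of_notMem (neg_one_notMem_image_gridPos H),
    card_image_of_injective _ gridPos_injective]

theorem card_filter_gridToCyclic_add (H : Finset (Fin n × Fin r)) {j : ℕ} (hj : j ≤ n + 1) :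
    #{t ∈ gridToCyclic H | t.val < j * r} + #{c ∈ H | c.1.val + 1 ≤ n + 1 - j} = #H := by
  have hlast : ¬ (-1 : ZMod (r * (n + 1) + 1)).val < j * r := by
    rw [ZMod.val_neg_one, not_lt, mul_comm]; exact Nat.mul_le_mul_left r hj
  rw [gridToCyclic, filter_insert, if_neg hlast, filter_image,
    card_image_of_injective _ gridPos_injective, ← card_filter_add_card_filter_not (s := H)
      (fun c : Fin n × Fin r => (gridPos n r c).val < j * r)]
  congr 2
  refine filter_congr fun c _ => ?_
  rw [val_gridPos_lt_mul_iff]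
  omega

theorem isDominant_gridToCyclic_iff (hr : 0 < r) {H : Finset (Fin n × Fin r)} (hH : #H = n) :
    IsDominant r (gridToCyclic H) ↔ ∀ k ∈ Icc 1 n, k ≤ #{c ∈ H | c.1.val + 1 ≤ k} := by
  rw [isDominant_iff_forall_card_filter_val_lt_mul_lt hr (card_gridToCyclic H).le
    (by rw [hH]; omega)]
  constructor
  · intro h k hk
    rw [mem_Icc] at hk
    have := card_filter_gridToCyclic_add H (j := n + 1 - k) (by omega)
    have := h (n + 1 - k) (mem_Icc.2 ⟨by omega, by omega⟩)
    rw [show n + 1 - (n + 1 - k) = k by omega] at *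
    omega
  · intro h j hj
    rw [mem_Icc] at hj
    have := card_filter_gridToCyclic_add H (j := j) (by omega)
    rcases eq_or_ne j (n + 1) with rfl | hjn
    · omega
    · have := h (n + 1 - j) (mem_Icc.2 ⟨by omega, by omega⟩)
      omega

theorem neg_one_mem_of_isDominant (hr : 0 < r) {T : Finset (ZMod (r * (n + 1) + 1))}
    (hT : IsDominant r T) (hcard : #T = n + 1) : -1 ∈ T := by
  have h := hT (r * (n + 1)) (mem_Icc.2 ⟨Nat.mul_pos hr n.succ_pos, by omega⟩)
  obtain ⟨t, ht, hlt⟩ := exists_mem_notMem_of_card_lt_card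
    (s := {t ∈ T | t.val < r * (n + 1)}) (by rw [hcard]; exact Nat.lt_of_mul_lt_mul_left h)
  have hle : r * (n + 1) ≤ t.val := not_lt.1 fun h => hlt (mem_filter.2 ⟨ht, h⟩)
  have : t = -1 := ZMod.val_injective _ (by have := ZMod.val_lt t; rw [ZMod.val_neg_one]; omega)
  exact this ▸ ht

theorem le_val_of_isDominant (hr : 0 < r) {T : Finset (ZMod (r * (n + 1) + 1))}
    (hT : IsDominant r T) {t : ZMod (r * (n + 1) + 1)} (ht : t ∈ T) : r ≤ t.val := by
  have h := hT r (mem_Icc.2 ⟨hr, Nat.le_succ_of_le (Nat.le_mul_of_pos_right r n.succ_pos)⟩)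
  have : #{t ∈ T | t.val < r} = 0 := by
    by_contra h'
    have := Nat.mul_le_mul_left r (Nat.one_le_iff_ne_zero.2 h')
    omega
  exact not_lt.1 (filter_eq_empty_iff.1 (card_eq_zero.1 this) ht)

theorem gridToCyclic_filter_gridPos_mem (hr : 0 < r) {T : Finset (ZMod (r * (n + 1) + 1))}
    (hT : IsDominant r T) (hcard : #T = n + 1) :
    gridToCyclic {c | gridPos n r c ∈ T} = T := by
  ext x
  simp only [gridToCyclic, mem_insert, mem_image, mem_filter, mem_univ, true_and]
  constructor
  · rintro (rfl | ⟨c, hc, rfl⟩)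
    exacts [neg_one_mem_of_isDominant hr hT hcard, hc]
  · intro hx
    refine or_iff_not_imp_left.2 fun hx₁ => ?_
    have hne : x.val ≠ (-1 : ZMod (r * (n + 1) + 1)).val :=
      fun h => hx₁ (ZMod.val_injective _ h)
    rw [ZMod.val_neg_one] at hne
    obtain ⟨c, rfl⟩ := exists_gridPos_eq (le_val_of_isDominant hr hT hx)
      (by have := ZMod.val_lt x; omega)
    exact ⟨c, hx, rfl⟩

theorem card_ballot_eq_card_isDominant (hr : 0 < r) :
    #{H : Finset (Fin n × Fin r) | #H = n ∧ ∀ k ∈ Icc 1 n, k ≤ #{c ∈ H | c.1.val + 1 ≤ k}} =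
      #{T : Finset (ZMod (r * (n + 1) + 1)) | #T = n + 1 ∧ IsDominant r T} := by
  refine card_bij (fun H _ => gridToCyclic H) (fun H hH => ?_) (fun H₁ _ H₂ _ h => ?_)
    (fun T hT => ?_)
  · simp only [mem_filter, mem_univ, true_and] at hH ⊢
    exact ⟨by rw [card_gridToCyclic, hH.1],
      (isDominant_gridToCyclic_iff hr hH.1).2 hH.2⟩
  · have := congrArg (·.erase (-1)) h
    simp only [gridToCyclic, erase_insert (neg_one_notMem_image_gridPos _)] at this
    exact image_injective gridPos_injective this
  · simp only [mem_filter, mem_univ, true_and] at hT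
    have hT' := gridToCyclic_filter_gridPos_mem hr hT.2 hT.1
    have hcard : #({c | gridPos n r c ∈ T} : Finset (Fin n × Fin r)) = n := by
      have := card_gridToCyclic {c | gridPos n r c ∈ T}
      rw [hT', hT.1] at this
      omega
    refine ⟨_, ?_, hT'⟩
    simp only [mem_filter, mem_univ, true_and]
    rw [← isDominant_gridToCyclic_iff hr hcard, hT']
    exact ⟨hcard, hT.2⟩

end Grid

theorem eq_factorial_div_of_succ_mul_eq_choose {m k d : ℕ} (hk : k ≤ m + 1)
    (h : (m + 1) * d = (m + 1).choose k) : d = m ! / (k ! * (m + 1 - k)!) := by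
  refine (Nat.div_eq_of_eq_mul_left (by positivity) ?_).symm
  refine Nat.eq_of_mul_eq_mul_left (by omega : 0 < m + 1) ?_
  rw [← Nat.factorial_succ, ← Nat.choose_mul_factorial_mul_factorial hk, ← h]
  ring

theorem higher_catalan_count_general (n r : ℕ) (hr : 1 ≤ r) :
    (Finset.univ.filter (fun H : Finset (Fin n × Fin r) =>
        H.card = n ∧ ∀ k ∈ Finset.Icc 1 n,
          k ≤ (H.filter (fun p : Fin n × Fin r => p.1.val + 1 ≤ k)).card)).card
      = (r * (n + 1)).factorial
          / ((n + 1).factorial * ((r - 1) * (n + 1) + 1).factorial) := by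
  rw [card_ballot_eq_card_isDominant hr]
  have hsize : r * (n + 1) + 1 - (n + 1) = (r - 1) * (n + 1) + 1 := by
    obtain ⟨r, rfl⟩ := Nat.exists_eq_add_of_le' hr
    rw [Nat.add_sub_cancel, add_mul, one_mul]
    omega
  rw [← hsize]
  exact eq_factorial_div_of_succ_mul_eq_choose (by omega) (mul_card_isDominant_eq_choose rfl)

/-- The number of subsets `H` of `{1,...,n} × {1,...,r}` (encoded as `Fin n × Fin r`,
with the first coordinate `i` representing `i+1`) with `|H| = n` and
`|H ∩ ({1,...,k} × {1,...,r})| ≥ k` for every `1 ≤ k ≤ n`, equals the higher Catalan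
number `(r(n+1))! / ((n+1)! · ((r-1)(n+1)+1)!)`. -/
theorem higher_catalan_count (n r : ℕ) (hn : 1 ≤ n) (hr : 1 ≤ r) :
    (Finset.univ.filter (fun H : Finset (Fin n × Fin r) =>
        H.card = n ∧ ∀ k ∈ Finset.Icc 1 n,
          k ≤ (H.filter (fun p : Fin n × Fin r => p.1.val + 1 ≤ k)).card)).card
      = (r * (n + 1)).factorial
          / ((n + 1).factorial * ((r - 1) * (n + 1) + 1).factorial) :=
  higher_catalan_count_general n r hr
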